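/- arXiv:1506.07472 — 7 statements merged into one kernel-verified Lean document; each statement's English description precedes it below -/
import Mathlib

section
/- Let n be a positive integer, let k be a real number with k ≠ 1, and let p : Fin n → ℝ satisfy Σ_r p r = 1. Define q : Fin n → Fin n → ℝ by q s r := p s + (δ_{rs} − p s)/(k − 1), where δ_{rs} is 1 if r = s and 0 otherwise (q s r is the conditional pair frequency q_{s|r}). Then for all r, s: k · q s r = δ_{sr} + (k − 1) · Σ_h (q s h) · (q h r). -/
/-- The Ohtsuki–Nowak closed-form conditional pair frequencies
`q_{s|r} = p_s + (δ_{rs} − p_s)/(k−1)` satisfy the local pair-equilibrium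
equation `k q_{s|r} = δ_{sr} + (k−1) Σ_h q_{s|h} q_{h|r}`. -/
theorem local_equilibrium_solution (n : ℕ) (hn : 0 < n) (k : ℝ) (hk : k ≠ 1)
    (p : Fin n → ℝ) (hp : ∑ r, p r = 1)
    (q : Fin n → Fin n → ℝ)
    (hq : ∀ s r, q s r = p s + ((if r = s then (1 : ℝ) else 0) - p s) / (k - 1)) :
    ∀ r s, k * q s r
      = (if s = r then (1 : ℝ) else 0) + (k - 1) * ∑ h, q s h * q h r := by
  intro r s
  have hk1 : k - 1 ≠ 0 := sub_ne_zero.mpr hk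
  have hterm : ∀ h, q s h * q h r =
      ((k-1-1)/(k-1))^2 * (p s * p h)
      + (1/(k-1)) * ((k-1-1)/(k-1)) * p s * (if r = h then (1:ℝ) else 0)
      + (1/(k-1)) * ((k-1-1)/(k-1)) * (if h = s then (1:ℝ) else 0) * p h
      + (1/(k-1))^2 * (if h = s then (1:ℝ) else 0) * (if r = h then (1:ℝ) else 0) := by
    intro h
    rw [hq, hq]
    set a := (if h = s then (1:ℝ) else 0) with ha
    set b := (if r = h then (1:ℝ) else 0) with hb
    field_simp
    ring
  have hsum : ∑ h, q s h * q h r =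
      ((k-1-1)/(k-1))^2 * p s
      + (1/(k-1)) * ((k-1-1)/(k-1)) * p s
      + (1/(k-1)) * ((k-1-1)/(k-1)) * p s
      + (1/(k-1))^2 * (if s = r then (1:ℝ) else 0) := by
    rw [Finset.sum_congr rfl (fun h _ => hterm h)]
    rw [Finset.sum_add_distrib, Finset.sum_add_distrib, Finset.sum_add_distrib]
    congr 1
    congr 1
    congr 1
    · rw [← Finset.mul_sum, ← Finset.mul_sum, hp]; ring
    · rw [← Finset.mul_sum, Finset.sum_ite_eq Finset.univ r (fun _ => (1:ℝ))]
      simp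
    · have : ∀ h : Fin n, (1/(k-1)) * ((k-1-1)/(k-1)) * (if h = s then (1:ℝ) else 0) * p h
          = if h = s then (1/(k-1)) * ((k-1-1)/(k-1)) * p h else 0 := by
        intro h; split <;> simp
      rw [Finset.sum_congr rfl (fun h _ => this h),
        Finset.sum_ite_eq' Finset.univ s (fun h => (1/(k-1)) * ((k-1-1)/(k-1)) * p h)]
      simp
    · have : ∀ h : Fin n, (1/(k-1))^2 * (if h = s then (1:ℝ) else 0) * (if r = h then (1:ℝ) else 0)
          = if h = s then (1/(k-1))^2 * (if r = h then (1:ℝ) else 0) else 0 := by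
        intro h; split <;> simp
      rw [Finset.sum_congr rfl (fun h _ => this h),
        Finset.sum_ite_eq' Finset.univ s (fun h => (1/(k-1))^2 * (if r = h then (1:ℝ) else 0))]
      simp only [Finset.mem_univ, if_true]
      by_cases hrs : s = r
      · subst hrs; simp
      · rw [if_neg hrs, if_neg (fun h => hrs h.symm)]
  rw [hq, hsum]
  by_cases hrs : r = s
  · subst hrs; simp only [if_pos rfl]
    field_simp
    ring
  · rw [if_neg hrs, if_neg (fun h => hrs h.symm)]
    field_simp
    ring
end

section
/- Let n be a positive integer, let k be a real number with k ≠ 2, let a : Fin n → Fin n → ℝ, and let p : Fin n → ℝ satisfy Σ_s p s = 1. Define b r s := (a r r + a r s − a s r − a s s)/(k − 2) and φ := Σ_{s,t} (p s) (p t) (a s t). Then for every r: (k − 2) · (Σ_s (p s) · (a r s + b r s) − φ) = −(k − 2)·φ + (k − 1)·Σ_s (a r s)(p s) − Σ_s (a s r)(p s) − Σ_s (a s s)(p s) + a r r. -/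
/-- For pairwise comparison updating, the weak-selection bracket
equals `(k−2)` times the right-hand side of the replicator equation on graphs
with the Ohtsuki–Nowak correction `b_{rs} = (a_{rr}+a_{rs}−a_{sr}−a_{ss})/(k−2)`. -/
theorem pairwise_comparison_replicator_bracket (n : ℕ) (hn : 0 < n)
    (k : ℝ) (hk : k ≠ 2)
    (a : Fin n → Fin n → ℝ)
    (p : Fin n → ℝ) (hp : ∑ s, p s = 1)
    (b : Fin n → Fin n → ℝ)
    (hb : ∀ r s, b r s = (a r r + a r s - a s r - a s s) / (k - 2))
    (φ : ℝ) (hφ : φ = ∑ s, ∑ t, p s * p t * a s t) :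
    ∀ r, (k - 2) * ((∑ s, p s * (a r s + b r s)) - φ)
      = -(k - 2) * φ + (k - 1) * (∑ s, a r s * p s)
        - (∑ s, a s r * p s) - (∑ s, a s s * p s) + a r r := by
  intro r
  have hk2 : k - 2 ≠ 0 := sub_ne_zero.mpr hk
  have key : ∀ s, (k - 2) * (p s * (a r s + b r s))
      = (k - 1) * (a r s * p s) - a s r * p s - a s s * p s + a r r * p s := by
    intro s
    rw [hb]
    field_simp
    ring
  calc (k - 2) * ((∑ s, p s * (a r s + b r s)) - φ)
      = (∑ s, (k - 2) * (p s * (a r s + b r s))) - (k - 2) * φ := by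
        rw [mul_sub, Finset.mul_sum]
    _ = (∑ s, ((k - 1) * (a r s * p s) - a s r * p s - a s s * p s + a r r * p s))
        - (k - 2) * φ := by
        simp only [key]
    _ = -(k - 2) * φ + (k - 1) * (∑ s, a r s * p s)
        - (∑ s, a s r * p s) - (∑ s, a s s * p s) + a r r := by
        rw [Finset.sum_add_distrib, Finset.sum_sub_distrib, Finset.sum_sub_distrib,
          ← Finset.mul_sum, ← Finset.mul_sum, hp, mul_one]
        ring
end

section
/- Let m be a positive integer, let k be a real number, let b, c : Fin m → ℝ, define the payoff matrix a r s := b s − c r, and let p : Fin m → ℝ satisfy Σ_v p v = 1. Set B := Σ_v (b v)(p v), C := Σ_v (c v)(p v), and φ := Σ_{s,t} (p s)(p t)(a s t). Then for every r: −(k − 2)(k + 1)·φ + (k² − k − 1)·Σ_s (a r s)(p s) − Σ_s (a s r)(p s) − (k + 1)·Σ_s (a s s)(p s) + (k + 1)·(a r r) = k·((b r − B) − k·(c r − C)). Consequently, for k > 0 this expression is positive if and only if k(c r − C) < b r − B. -/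
/-- For the genotypically asymmetric Donation Game under
death-birth updating, the weak-selection bracket equals
`k ((b_r − B) − k (c_r − C))`; hence (Eq. 13) cooperators of genotype `r`
increase iff `k (c_r − C) < b_r − B`. -/
theorem donation_death_birth_bracket (m : ℕ) (hm : 0 < m) (k : ℝ)
    (b c : Fin m → ℝ)
    (a : Fin m → Fin m → ℝ) (ha : ∀ r s, a r s = b s - c r)
    (p : Fin m → ℝ) (hp : ∑ v, p v = 1)
    (B C φ : ℝ)
    (hB : B = ∑ v, b v * p v) (hC : C = ∑ v, c v * p v)
    (hφ : φ = ∑ s, ∑ t, p s * p t * a s t) :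
    ∀ r, (-(k - 2) * (k + 1) * φ + (k ^ 2 - k - 1) * (∑ s, a r s * p s)
        - (∑ s, a s r * p s) - (k + 1) * (∑ s, a s s * p s) + (k + 1) * a r r
      = k * ((b r - B) - k * (c r - C))) ∧
      (0 < k →
        (0 < -(k - 2) * (k + 1) * φ + (k ^ 2 - k - 1) * (∑ s, a r s * p s)
          - (∑ s, a s r * p s) - (k + 1) * (∑ s, a s s * p s) + (k + 1) * a r r
        ↔ k * (c r - C) < b r - B)) := by
  intro r
  have h1 : (∑ s, a r s * p s) = B - c r := by
    simp only [ha, sub_mul, hB]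
    rw [Finset.sum_sub_distrib, ← Finset.mul_sum, hp, mul_one]
  have h2 : (∑ s, a s r * p s) = b r - C := by
    simp only [ha, sub_mul, hC]
    rw [Finset.sum_sub_distrib, ← Finset.mul_sum, hp, mul_one]
  have h3 : (∑ s, a s s * p s) = B - C := by
    simp only [ha, sub_mul, hB, hC]
    rw [Finset.sum_sub_distrib]
  have h4 : φ = B - C := by
    rw [hφ]
    have hin : ∀ s : Fin m, ∑ t, p s * p t * a s t = p s * B - p s * c s := by
      intro s
      have e : ∑ t, p s * p t * a s t = ∑ t, (p s * (b t * p t) - p s * c s * p t) := by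
        apply Finset.sum_congr rfl; intros; rw [ha]; ring
      rw [e, Finset.sum_sub_distrib, ← Finset.mul_sum, ← Finset.mul_sum, hp, hB, mul_one]
    simp only [hin]
    rw [Finset.sum_sub_distrib, ← Finset.sum_mul, hp, one_mul, hC]
    congr 1
    apply Finset.sum_congr rfl; intros; ring
  have hbracket : -(k - 2) * (k + 1) * φ + (k ^ 2 - k - 1) * (∑ s, a r s * p s)
        - (∑ s, a s r * p s) - (k + 1) * (∑ s, a s s * p s) + (k + 1) * a r r
      = k * ((b r - B) - k * (c r - C)) := by
    rw [h1, h2, h3, h4, ha]; ring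
  refine ⟨hbracket, fun hk => ?_⟩
  rw [hbracket]
  constructor
  · intro h
    nlinarith
  · intro h
    nlinarith
end

section
/- Let m be a positive integer, let k be a real number, let b, c : Fin m → ℝ, define the payoff matrix a r s := b s − c r, and let p : Fin m → ℝ satisfy Σ_v p v = 1. Set C := Σ_v (c v)(p v) and φ := Σ_{s,t} (p s)(p t)(a s t). Then for every r: −(k − 2)·φ + (k − 1)·Σ_s (a r s)(p s) − Σ_s (a s r)(p s) − Σ_s (a s s)(p s) + a r r = k·(C − c r). Consequently, for k > 0 this expression is positive if and only if c r < C, independently of the benefit values b. -/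
/-- For the genotypically asymmetric Donation Game under
birth-death updating, the weak-selection bracket equals `k (C − c_r)`; hence
(Eq. 14) cooperators of genotype `r` increase iff `c_r < C`, independently of
the benefit values. -/
theorem donation_birth_death_bracket (m : ℕ) (hm : 0 < m) (k : ℝ)
    (b c : Fin m → ℝ)
    (a : Fin m → Fin m → ℝ) (ha : ∀ r s, a r s = b s - c r)
    (p : Fin m → ℝ) (hp : ∑ v, p v = 1)
    (C φ : ℝ)
    (hC : C = ∑ v, c v * p v)
    (hφ : φ = ∑ s, ∑ t, p s * p t * a s t) :
    ∀ r, (-(k - 2) * φ + (k - 1) * (∑ s, a r s * p s)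
        - (∑ s, a s r * p s) - (∑ s, a s s * p s) + a r r
      = k * (C - c r)) ∧
      (0 < k →
        (0 < -(k - 2) * φ + (k - 1) * (∑ s, a r s * p s)
          - (∑ s, a s r * p s) - (∑ s, a s s * p s) + a r r
        ↔ c r < C)) := by
  intro r
  set B : ℝ := ∑ s, b s * p s with hB
  have h1 : ∑ s, a r s * p s = B - c r := by
    calc ∑ s, a r s * p s = ∑ s, (b s * p s - c r * p s) := by
          apply Finset.sum_congr rfl; intro s _; rw [ha]; ring
      _ = B - c r * ∑ s, p s := by
          rw [Finset.sum_sub_distrib, Finset.mul_sum]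
      _ = B - c r := by rw [hp, mul_one]
  have h2 : ∑ s, a s r * p s = b r - C := by
    calc ∑ s, a s r * p s = ∑ s, (b r * p s - c s * p s) := by
          apply Finset.sum_congr rfl; intro s _; rw [ha]; ring
      _ = b r * ∑ s, p s - C := by
          rw [Finset.sum_sub_distrib, Finset.mul_sum, hC]
      _ = b r - C := by rw [hp, mul_one]
  have h3 : ∑ s, a s s * p s = B - C := by
    calc ∑ s, a s s * p s = ∑ s, (b s * p s - c s * p s) := by
          apply Finset.sum_congr rfl; intro s _; rw [ha]; ring
      _ = B - C := by rw [Finset.sum_sub_distrib, hC]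
  have h4 : φ = B - C := by
    rw [hφ]
    calc ∑ s, ∑ t, p s * p t * a s t
        = ∑ s, (B * p s - c s * p s) := by
          apply Finset.sum_congr rfl; intro s _
          calc ∑ t, p s * p t * a s t = ∑ t, (p s * (b t * p t) - (c s * p s) * p t) := by
                apply Finset.sum_congr rfl; intro t _; rw [ha]; ring
            _ = p s * B - (c s * p s) * ∑ t, p t := by
                rw [Finset.sum_sub_distrib, ← Finset.mul_sum, ← Finset.mul_sum]
            _ = B * p s - c s * p s := by rw [hp, mul_one, mul_comm]
      _ = B * ∑ s, p s - C := by rw [Finset.sum_sub_distrib, ← Finset.mul_sum, hC]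
      _ = B - C := by rw [hp, mul_one]
  have key : -(k - 2) * φ + (k - 1) * (∑ s, a r s * p s)
      - (∑ s, a s r * p s) - (∑ s, a s s * p s) + a r r = k * (C - c r) := by
    rw [h1, h2, h3, h4, ha]; ring
  refine ⟨key, fun hk => ?_⟩
  rw [key]
  constructor
  · intro h; nlinarith
  · intro h; nlinarith
end

section
/- Let m be a positive integer, let k be a real number, let b, c : Fin m → ℝ, define the payoff matrix a r s := b s − c r, and let p : Fin m → ℝ satisfy Σ_v p v = 1. Set B := Σ_v (b v)(p v), C := Σ_v (c v)(p v), and φ := Σ_{s,t} (p s)(p t)(a s t). Then for every r: −(k − 2)(k + 3)·φ + (k² + k − 3)·Σ_s (a r s)(p s) − 3·Σ_s (a s r)(p s) − (k + 3)·Σ_s (a s s)(p s) + (k + 3)·(a r r) = k·((b r − B) − (k + 2)·(c r − C)). Consequently, for k > 0 this expression is positive if and only if (k + 2)(c r − C) < b r − B. -/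
/-- For the genotypically asymmetric Donation Game under
imitation updating, the weak-selection bracket equals
`k ((b_r − B) − (k+2)(c_r − C))`; hence cooperators of genotype `r` increase
iff `(k+2)(c_r − C) < b_r − B`. -/
theorem donation_imitation_bracket (m : ℕ) (hm : 0 < m) (k : ℝ)
    (b c : Fin m → ℝ)
    (a : Fin m → Fin m → ℝ) (ha : ∀ r s, a r s = b s - c r)
    (p : Fin m → ℝ) (hp : ∑ v, p v = 1)
    (B C φ : ℝ)
    (hB : B = ∑ v, b v * p v) (hC : C = ∑ v, c v * p v)
    (hφ : φ = ∑ s, ∑ t, p s * p t * a s t) :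
    ∀ r, (-(k - 2) * (k + 3) * φ + (k ^ 2 + k - 3) * (∑ s, a r s * p s)
        - 3 * (∑ s, a s r * p s) - (k + 3) * (∑ s, a s s * p s) + (k + 3) * a r r
      = k * ((b r - B) - (k + 2) * (c r - C))) ∧
      (0 < k →
        (0 < -(k - 2) * (k + 3) * φ + (k ^ 2 + k - 3) * (∑ s, a r s * p s)
          - 3 * (∑ s, a s r * p s) - (k + 3) * (∑ s, a s s * p s) + (k + 3) * a r r
        ↔ (k + 2) * (c r - C) < b r - B)) := by
  have h1 : ∀ r, (∑ s, a r s * p s) = B - c r := by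
    intro r
    simp only [ha, sub_mul, Finset.sum_sub_distrib, ← Finset.mul_sum, hp, mul_one, hB]
  have h2 : ∀ r, (∑ s, a s r * p s) = b r - C := by
    intro r
    simp only [ha, sub_mul, Finset.sum_sub_distrib, hC]
    rw [← Finset.mul_sum, hp, mul_one]
  have h3 : (∑ s, a s s * p s) = B - C := by
    simp only [ha, sub_mul, Finset.sum_sub_distrib, hB, hC]
  have h4 : φ = B - C := by
    rw [hφ]
    have : ∀ s, (∑ t, p s * p t * a s t) = p s * B - p s * c s := by
      intro s
      have : (∑ t, p s * p t * a s t) = ∑ t, (p s * (b t * p t) - (p s * c s) * p t) := by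
        refine Finset.sum_congr rfl fun t _ => ?_
        rw [ha]; ring
      rw [this, Finset.sum_sub_distrib, ← Finset.mul_sum, ← Finset.mul_sum, hp, mul_one, hB]
    rw [Finset.sum_congr rfl fun s _ => this s, Finset.sum_sub_distrib,
      ← Finset.sum_mul, hp, one_mul, hC]
    congr 1
    exact Finset.sum_congr rfl fun s _ => mul_comm _ _
  intro r
  have key : -(k - 2) * (k + 3) * φ + (k ^ 2 + k - 3) * (∑ s, a r s * p s)
        - 3 * (∑ s, a s r * p s) - (k + 3) * (∑ s, a s s * p s) + (k + 3) * a r r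
      = k * ((b r - B) - (k + 2) * (c r - C)) := by
    rw [h1, h2, h3, h4, ha]; ring
  refine ⟨key, fun hk => ?_⟩
  rw [key]
  constructor
  · intro h
    nlinarith
  · intro h
    have h' : 0 < (b r - B) - (k + 2) * (c r - C) := by linarith
    exact mul_pos hk h'
end

section
/- Let k, b̄, c̄, p be real numbers with k > 0 and 0 ≤ p < 1. Consider the two-strategy Donation Game payoff matrix with entries a_{CC} = b̄ − c̄, a_{CD} = −c̄, a_{DC} = b̄, a_{DD} = 0, and cooperator frequency p (defector frequency 1 − p). Then the death-birth bracket −(k−2)(k+1)·φ + (k²−k−1)·Σ_s a_{Cs}p_s − Σ_s a_{sC}p_s − (k+1)·Σ_s a_{ss}p_s + (k+1)·a_{CC}, where p_C = p, p_D = 1 − p and φ = Σ_{s,t} p_s p_t a_{st}, equals k·(1 − p)·(b̄ − k·c̄). In particular it is positive if and only if b̄ > k·c̄. -/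
/-- For the two-strategy Donation Game with averaged benefit
`b̄` and cost `c̄`, the death-birth weak-selection bracket for cooperators
equals `k (1 − p)(b̄ − k c̄)`; so cooperation increases iff `b̄ > k c̄`. -/
theorem donation_death_birth_bc_rule (k bbar cbar p : ℝ)
    (hk : 0 < k) (hp0 : 0 ≤ p) (hp1 : p < 1)
    (a : Fin 2 → Fin 2 → ℝ)
    (ha00 : a 0 0 = bbar - cbar) (ha01 : a 0 1 = -cbar)
    (ha10 : a 1 0 = bbar) (ha11 : a 1 1 = 0)
    (pv : Fin 2 → ℝ) (hpv0 : pv 0 = p) (hpv1 : pv 1 = 1 - p)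
    (φ : ℝ) (hφ : φ = ∑ s, ∑ t, pv s * pv t * a s t) :
    (-(k - 2) * (k + 1) * φ + (k ^ 2 - k - 1) * (∑ s, a 0 s * pv s)
        - (∑ s, a s 0 * pv s) - (k + 1) * (∑ s, a s s * pv s) + (k + 1) * a 0 0
      = k * (1 - p) * (bbar - k * cbar)) ∧
    (0 < -(k - 2) * (k + 1) * φ + (k ^ 2 - k - 1) * (∑ s, a 0 s * pv s)
        - (∑ s, a s 0 * pv s) - (k + 1) * (∑ s, a s s * pv s) + (k + 1) * a 0 0
      ↔ bbar > k * cbar) := by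
  have heq : (-(k - 2) * (k + 1) * φ + (k ^ 2 - k - 1) * (∑ s, a 0 s * pv s)
        - (∑ s, a s 0 * pv s) - (k + 1) * (∑ s, a s s * pv s) + (k + 1) * a 0 0
      = k * (1 - p) * (bbar - k * cbar)) := by
    simp only [hφ, Fin.sum_univ_two, ha00, ha01, ha10, ha11, hpv0, hpv1]
    ring
  refine ⟨heq, ?_⟩
  rw [heq]
  have h1 : 0 < k * (1 - p) := by nlinarith
  exact (mul_pos_iff_of_pos_left h1).trans sub_pos
end

section
/- Let N and k be positive integers, let w : Fin N → Fin N → ℝ be a symmetric matrix with all entries in {0,1}, zero diagonal, and every row sum equal to k, let i : Fin N, and let f : Fin N → ℝ satisfy f j > 0 for all j and f j ≤ f i for all j. Then (1/N²)·(1 − (f i)/((f i) + Σ_j (w i j)·(f j))) − (1/N²)·Σ_j (w i j)·((f i)/((f j) + Σ_l (w j l)·(f l))) ≤ 0. Moreover, if additionally f j < f i for every j with w i j = 1, then the inequality is strict. -/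
/-!
Write `D j = f j + ∑ₗ w j l f l` for the total fitness in the closed neighbourhood of `j`.
Since every fitness is at most `f i` and every vertex has `k` neighbours, `D j ≤ (k + 1) f i`,
so each of the ratios `f i / D j` is at least `1 / (k + 1)`. Hence the defector survives with
probability `f i / D i ≥ 1 / (k + 1)`, while the `k` neighbours together imitate it with
probability at least `k / (k + 1)`; the two bounds make the expected change nonpositive, and a
strictly fitter defector makes the first one strict.
-/

open Finset

lemma one_div_add_one_le_div {d M D : ℝ} (hd : 0 ≤ d) (hD : 0 < D) (h : D ≤ (d + 1) * M) :
    1 / (d + 1) ≤ M / D := by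
  rw [div_le_div_iff₀ (by linarith) hD]
  linarith

lemma one_div_add_one_lt_div {d M D : ℝ} (hd : 0 ≤ d) (hD : 0 < D) (h : D < (d + 1) * M) :
    1 / (d + 1) < M / D := by
  rw [div_lt_div_iff₀ (by linarith) hD]
  linarith

namespace WeightedGraph

variable {ι : Type*} [Fintype ι]

def closedNbhdFitness (w : ι → ι → ℝ) (f : ι → ℝ) (j : ι) : ℝ :=
  f j + ∑ l, w j l * f l

variable {w : ι → ι → ℝ} {f : ι → ℝ} {d M : ℝ}

lemma closedNbhdFitness_pos (hw : ∀ a b, 0 ≤ w a b) (hf : ∀ j, 0 < f j) (j : ι) :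
    0 < closedNbhdFitness w f j :=
  add_pos_of_pos_of_nonneg (hf j) (sum_nonneg fun l _ => mul_nonneg (hw j l) (hf l).le)

lemma closedNbhdFitness_le (hw : ∀ a b, 0 ≤ w a b) (hrow : ∀ a, ∑ b, w a b = d)
    (hM : ∀ l, f l ≤ M) (j : ι) : closedNbhdFitness w f j ≤ (d + 1) * M := by
  have hsum : ∑ l, w j l * f l ≤ d * M :=
    calc ∑ l, w j l * f l ≤ ∑ l, w j l * M :=
          sum_le_sum fun l _ => mul_le_mul_of_nonneg_left (hM l) (hw j l)
      _ = d * M := by rw [← sum_mul, hrow]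
  unfold closedNbhdFitness
  linarith [hM j]

lemma closedNbhdFitness_lt (hw : ∀ a b, 0 ≤ w a b) (hrow : ∀ a, ∑ b, w a b = d)
    (hM : ∀ l, f l ≤ M) {j l : ι} (hjl : 0 < w j l) (hl : f l < M) :
    closedNbhdFitness w f j < (d + 1) * M := by
  have hsum : ∑ l, w j l * f l < d * M :=
    calc ∑ l, w j l * f l < ∑ l, w j l * M :=
          sum_lt_sum (fun l _ => mul_le_mul_of_nonneg_left (hM l) (hw j l))
            ⟨l, mem_univ l, mul_lt_mul_of_pos_left hl hjl⟩
      _ = d * M := by rw [← sum_mul, hrow]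
  unfold closedNbhdFitness
  linarith [hM j]

lemma div_add_one_le_sum_mul_div_closedNbhdFitness (hw : ∀ a b, 0 ≤ w a b)
    (hf : ∀ j, 0 < f j) (hrow : ∀ a, ∑ b, w a b = d) (hM : ∀ l, f l ≤ M) (i : ι) :
    d / (d + 1) ≤ ∑ j, w i j * (M / closedNbhdFitness w f j) := by
  have hd : 0 ≤ d := hrow i ▸ sum_nonneg fun b _ => hw i b
  calc d / (d + 1) = ∑ j, w i j * (1 / (d + 1)) := by rw [← sum_mul, hrow]; ring
    _ ≤ _ := sum_le_sum fun j _ => mul_le_mul_of_nonneg_left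
          (one_div_add_one_le_div hd (closedNbhdFitness_pos hw hf j)
            (closedNbhdFitness_le hw hrow hM j)) (hw i j)

lemma one_sub_div_sub_sum_nonpos (hw : ∀ a b, 0 ≤ w a b) (hf : ∀ j, 0 < f j)
    (hrow : ∀ a, ∑ b, w a b = d) (hM : ∀ l, f l ≤ M) (i : ι) :
    1 - M / closedNbhdFitness w f i - ∑ j, w i j * (M / closedNbhdFitness w f j) ≤ 0 := by
  have hd : 0 ≤ d := hrow i ▸ sum_nonneg fun b _ => hw i b
  have hself := one_div_add_one_le_div hd (closedNbhdFitness_pos hw hf i)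
    (closedNbhdFitness_le hw hrow hM i)
  have hnbrs := div_add_one_le_sum_mul_div_closedNbhdFitness hw hf hrow hM i
  have hsplit : 1 / (d + 1) + d / (d + 1) = 1 := by field_simp; ring
  linarith

lemma one_sub_div_sub_sum_neg (hw : ∀ a b, 0 ≤ w a b) (hf : ∀ j, 0 < f j)
    (hrow : ∀ a, ∑ b, w a b = d) (hM : ∀ l, f l ≤ M) {i l : ι} (hil : 0 < w i l)
    (hl : f l < M) :
    1 - M / closedNbhdFitness w f i - ∑ j, w i j * (M / closedNbhdFitness w f j) < 0 := by
  have hd : 0 ≤ d := hrow i ▸ sum_nonneg fun b _ => hw i b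
  have hself := one_div_add_one_lt_div hd (closedNbhdFitness_pos hw hf i)
    (closedNbhdFitness_lt hw hrow hM hil hl)
  have hnbrs := div_add_one_le_sum_mul_div_closedNbhdFitness hw hf hrow hM i
  have hsplit : 1 / (d + 1) + d / (d + 1) = 1 := by field_simp; ring
  linarith

end WeightedGraph

open WeightedGraph in
theorem imitation_lone_defector_change_general (N k : ℕ) (hk : 0 < k)
    (w : Fin N → Fin N → ℝ)
    (h01 : ∀ i j, w i j = 0 ∨ w i j = 1)
    (hrow : ∀ i, ∑ j, w i j = k)
    (i : Fin N) (f : Fin N → ℝ)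
    (hfpos : ∀ j, 0 < f j) (hfle : ∀ j, f j ≤ f i) :
    ((1 / ((N : ℝ) ^ 2)) * (1 - f i / (f i + ∑ j, w i j * f j))
        - (1 / ((N : ℝ) ^ 2)) * ∑ j, w i j * (f i / (f j + ∑ l, w j l * f l))
      ≤ 0) ∧
    ((∀ j, w i j = 1 → f j < f i) →
      (1 / ((N : ℝ) ^ 2)) * (1 - f i / (f i + ∑ j, w i j * f j))
        - (1 / ((N : ℝ) ^ 2)) * ∑ j, w i j * (f i / (f j + ∑ l, w j l * f l))
      < 0) := by
  have hw : ∀ a b, 0 ≤ w a b := fun a b => by rcases h01 a b with h | h <;> simp [h]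
  have hscale : 0 < 1 / ((N : ℝ) ^ 2) := by have := i.pos; positivity
  simp only [← mul_sub]
  refine ⟨mul_nonpos_of_nonneg_of_nonpos hscale.le
    (one_sub_div_sub_sum_nonpos hw hfpos hrow hfle i), fun hstrict => ?_⟩
  obtain ⟨j, hj⟩ : ∃ j, w i j = 1 := by
    by_contra! h
    have hzero : ∑ j, w i j = 0 := sum_eq_zero fun j _ => (h01 i j).resolve_right (h j)
    rw [hrow] at hzero
    exact hk.ne' (by exact_mod_cast hzero)
  exact mul_neg_of_pos_of_neg hscale
    (one_sub_div_sub_sum_neg hw hfpos hrow hfle (hj ▸ one_pos) (hstrict j hj))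

/-- In the imitation process with a single defector of maximal
fitness at vertex `i`, the expected change in the frequency of cooperators is
nonpositive, and strictly negative if all of the defector's neighbors have
strictly smaller fitness. -/
theorem imitation_lone_defector_change (N k : ℕ) (hN : 0 < N) (hk : 0 < k)
    (w : Fin N → Fin N → ℝ)
    (hsym : ∀ i j, w i j = w j i)
    (h01 : ∀ i j, w i j = 0 ∨ w i j = 1)
    (hdiag : ∀ i, w i i = 0)
    (hrow : ∀ i, ∑ j, w i j = k)
    (i : Fin N) (f : Fin N → ℝ)
    (hfpos : ∀ j, 0 < f j) (hfle : ∀ j, f j ≤ f i) :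
    ((1 / ((N : ℝ) ^ 2)) * (1 - f i / (f i + ∑ j, w i j * f j))
        - (1 / ((N : ℝ) ^ 2)) * ∑ j, w i j * (f i / (f j + ∑ l, w j l * f l))
      ≤ 0) ∧
    ((∀ j, w i j = 1 → f j < f i) →
      (1 / ((N : ℝ) ^ 2)) * (1 - f i / (f i + ∑ j, w i j * f j))
        - (1 / ((N : ℝ) ^ 2)) * ∑ j, w i j * (f i / (f j + ∑ l, w j l * f l))
      < 0) :=
  imitation_lone_defector_change_general N k hk w h01 hrow i f hfpos hfle
end
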